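/- Suppose the kernels satisfy, for every x,y ∈ ℝ^d with x ≠ y: D^{(11)}(x,y) < 0, D^{(22)}(x,y) < 0, and D^{(11)}(x,y)·D^{(22)}(x,y) > (D^{(12)}(x,y))². Then every energy minimizer ρ_* is a pair of Dirac masses: there exist indices ι_1, ι_2 ∈ {1,…,N} such that ρ_*^{(1)}(x_{ι_1}) = 1 and ρ_*^{(2)}(x_{ι_2}) = 1 (and the mass of species i vanishes at all other vertices). -/

import Mathlib

/-!
Let `m i a = ρ i a * μ a` be the masses of a minimizer. Averaging the energies of the Dirac pairs
`(δ_a, δ_b)` with weights `m 0 a * m 1 b` gives the energy of `m` plus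
`½ ∑ᵢ ∑_{a,b} m i a * m i b * D⁽ⁱⁱ⁾(x_a, x_b)`. Minimality makes the average at least the energy
of `m`, while `D⁽ⁱⁱ⁾ < 0` off the diagonal makes the correction nonpositive, and zero only when
`m i a * m i b = 0` for all `a ≠ b`, i.e. when each species sits at a single vertex.
-/

open Finset

/-- The nonlocal cross-interaction energy on a finite graph with vertices `x`,
vertex weights `μ`, kernels `K`, and two-species densities `ρ`. -/
noncomputable def energyGG {N d : ℕ} (x : Fin N → EuclideanSpace ℝ (Fin d)) (μ : Fin N → ℝ)
    (K : Fin 2 → Fin 2 → EuclideanSpace ℝ (Fin d) → EuclideanSpace ℝ (Fin d) → ℝ)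
    (ρ : Fin 2 → Fin N → ℝ) : ℝ :=
  (1 / 2) * ∑ i : Fin 2, ∑ k : Fin 2, ∑ ι : Fin N, ∑ κ : Fin N,
    K i k (x ι) (x κ) * ρ i ι * ρ k κ * (μ ι * μ κ)

/-- A two-species distribution: nonnegative densities with total mass one for each species. -/
def IsDistGG {N : ℕ} (μ : Fin N → ℝ) (ρ : Fin 2 → Fin N → ℝ) : Prop :=
  (∀ i ι, 0 ≤ ρ i ι) ∧ ∀ i, ∑ ι : Fin N, ρ i ι * μ ι = 1

variable {σ α : Type*} [Fintype σ] [Fintype α]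

noncomputable def massEnergy (V : σ → σ → α → α → ℝ) (m : σ → α → ℝ) : ℝ :=
  1 / 2 * ∑ i, ∑ k, ∑ a, ∑ b, m i a * m k b * V i k a b

theorem energyGG_eq_massEnergy {N d : ℕ} (x : Fin N → EuclideanSpace ℝ (Fin d)) (μ : Fin N → ℝ)
    (K : Fin 2 → Fin 2 → EuclideanSpace ℝ (Fin d) → EuclideanSpace ℝ (Fin d) → ℝ)
    (ρ : Fin 2 → Fin N → ℝ) :
    energyGG x μ K ρ =
      massEnergy (fun i k a b => K i k (x a) (x b)) (fun i a => ρ i a * μ a) := by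
  unfold energyGG massEnergy
  congr! 5
  ring

theorem energyGG_div_eq_massEnergy {N d : ℕ} (x : Fin N → EuclideanSpace ℝ (Fin d))
    {μ : Fin N → ℝ} (hμ : ∀ a, μ a ≠ 0)
    (K : Fin 2 → Fin 2 → EuclideanSpace ℝ (Fin d) → EuclideanSpace ℝ (Fin d) → ℝ)
    (m : Fin 2 → Fin N → ℝ) :
    energyGG x μ K (fun i a => m i a / μ a) = massEnergy (fun i k a b => K i k (x a) (x b)) m := by
  simp only [energyGG_eq_massEnergy, div_mul_cancel₀ _ (hμ _)]

theorem isDistGG_div {N : ℕ} {μ : Fin N → ℝ} (hμ : ∀ a, 0 < μ a) {m : Fin 2 → Fin N → ℝ}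
    (hm₀ : ∀ i a, 0 ≤ m i a) (hm₁ : ∀ i, ∑ a, m i a = 1) :
    IsDistGG μ (fun i a => m i a / μ a) :=
  ⟨fun i a => div_nonneg (hm₀ i a) (hμ a).le, by
    simpa only [div_mul_cancel₀ _ (hμ _).ne'] using hm₁⟩

theorem massEnergy_single [DecidableEq α] (V : σ → σ → α → α → ℝ) (s : σ → α) :
    massEnergy V (fun i => Pi.single (s i) 1) = 1 / 2 * ∑ i, ∑ k, V i k (s i) (s k) := by
  simp [massEnergy, Pi.single_apply]

theorem sum_sum_mul_of_sum_eq_one {u w : α → ℝ} (hw : ∑ b, w b = 1) (f : α → ℝ) :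
    ∑ a, ∑ b, u a * w b * f a = ∑ a, u a * f a := by
  simp [mul_right_comm _ _ (f _), ← mul_sum, hw]

theorem sum_mul_massEnergy_single [DecidableEq α] (V : Fin 2 → Fin 2 → α → α → ℝ)
    (m : Fin 2 → α → ℝ) (hm : ∀ i, ∑ a, m i a = 1) :
    ∑ a, ∑ b, m 0 a * m 1 b * massEnergy V (fun i => Pi.single (![a, b] i) 1) =
      massEnergy V m + 1 / 2 * ∑ i, ∑ a, ∑ b, m i a * m i b * (V i i a a - V i i a b) := by
  simp only [massEnergy_single, Fin.sum_univ_two, Matrix.cons_val_zero, Matrix.cons_val_one]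
  unfold massEnergy
  simp only [Fin.sum_univ_two]
  have self₀ := sum_sum_mul_of_sum_eq_one (u := m 0) (hm 0) fun a => V 0 0 a a
  have self₁ := sum_sum_mul_of_sum_eq_one (u := m 1) (hm 1) fun a => V 1 1 a a
  have mixed₀ := sum_sum_mul_of_sum_eq_one (u := m 0) (hm 1) fun a => V 0 0 a a
  have mixed₁ : ∑ a, ∑ b, m 0 a * m 1 b * V 1 1 b b = ∑ a, m 1 a * V 1 1 a a := by
    rw [sum_comm, ← sum_sum_mul_of_sum_eq_one (hm 0)]
    simp only [mul_comm (m 0 _)]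
  have cross : ∑ a, ∑ b, m 1 a * m 0 b * V 1 0 a b = ∑ a, ∑ b, m 0 a * m 1 b * V 1 0 b a := by
    rw [sum_comm]
    simp only [mul_comm (m 1 _)]
  simp only [mul_sub, sum_sub_distrib, mul_add, sum_add_distrib,
    mul_left_comm _ (1 / 2 : ℝ), ← mul_sum] at *
  linarith

theorem mul_eq_zero_of_massEnergy_le_single [DecidableEq α] {V : Fin 2 → Fin 2 → α → α → ℝ}
    (hV : ∀ i a b, a ≠ b → V i i a a - V i i a b < 0) {m : Fin 2 → α → ℝ}
    (hm₀ : ∀ i a, 0 ≤ m i a) (hm₁ : ∀ i, ∑ a, m i a = 1)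
    (hmin : ∀ a b, massEnergy V m ≤ massEnergy V (fun i => Pi.single (![a, b] i) 1))
    (i : Fin 2) {a b : α} (hab : a ≠ b) :
    m i a * m i b = 0 := by
  have hterm : ∀ i a b, m i a * m i b * (V i i a a - V i i a b) ≤ 0 := by
    intro i a b
    rcases eq_or_ne a b with rfl | hab
    · simp
    · exact mul_nonpos_of_nonneg_of_nonpos (mul_nonneg (hm₀ i a) (hm₀ i b)) (hV i a b hab).le
  have hrow : ∀ i a, ∑ b, m i a * m i b * (V i i a a - V i i a b) ≤ 0 :=
    fun i a => sum_nonpos fun b _ => hterm i a b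
  have hspecies : ∀ i, ∑ a, ∑ b, m i a * m i b * (V i i a a - V i i a b) ≤ 0 :=
    fun i => sum_nonpos fun a _ => hrow i a
  have hdeficit : ∑ i, ∑ a, ∑ b, m i a * m i b * (V i i a a - V i i a b) = 0 := by
    refine le_antisymm (sum_nonpos fun i _ => hspecies i) ?_
    have havg : massEnergy V m ≤
        ∑ a, ∑ b, m 0 a * m 1 b * massEnergy V (fun i => Pi.single (![a, b] i) 1) :=
      calc massEnergy V m = ∑ a, ∑ b, m 0 a * m 1 b * massEnergy V m := by
            rw [sum_sum_mul_of_sum_eq_one (hm₁ 1) fun _ => massEnergy V m, ← sum_mul,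
              hm₁ 0, one_mul]
        _ ≤ _ := sum_le_sum fun a _ => sum_le_sum fun b _ =>
            mul_le_mul_of_nonneg_left (hmin a b) (mul_nonneg (hm₀ 0 a) (hm₀ 1 b))
    rw [sum_mul_massEnergy_single V m hm₁] at havg
    linarith
  have hzero_i := (sum_eq_zero_iff_of_nonpos fun i _ => hspecies i).1 hdeficit i (mem_univ i)
  have hzero_ia := (sum_eq_zero_iff_of_nonpos fun a _ => hrow i a).1 hzero_i a (mem_univ a)
  have hzero := (sum_eq_zero_iff_of_nonpos fun b _ => hterm i a b).1 hzero_ia b (mem_univ b)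
  exact (mul_eq_zero.1 hzero).resolve_right (hV i a b hab).ne

theorem exists_eq_one_of_sum_eq_one_of_mul_eq_zero {w : α → ℝ} (h₁ : ∑ a, w a = 1)
    (h : ∀ a b, a ≠ b → w a * w b = 0) : ∃ a, w a = 1 ∧ ∀ b, b ≠ a → w b = 0 := by
  obtain ⟨a, -, ha⟩ := exists_ne_zero_of_sum_ne_zero (h₁ ▸ one_ne_zero)
  have hzero : ∀ b, b ≠ a → w b = 0 := fun b hb => (mul_eq_zero.1 (h b a hb)).resolve_right ha
  refine ⟨a, ?_, hzero⟩
  rwa [sum_eq_single a (fun b _ => hzero b) (by simp)] at h₁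

theorem aggregation_of_both_species
    (N d : ℕ)
    (x : Fin N → EuclideanSpace ℝ (Fin d)) (hx : Function.Injective x)
    (μ : Fin N → ℝ) (hμ : ∀ ι, 0 < μ ι)
    (K : Fin 2 → Fin 2 → EuclideanSpace ℝ (Fin d) → EuclideanSpace ℝ (Fin d) → ℝ)
    (hD11 : ∀ p q : EuclideanSpace ℝ (Fin d), p ≠ q → K 0 0 p p - K 0 0 p q < 0)
    (hD22 : ∀ p q : EuclideanSpace ℝ (Fin d), p ≠ q → K 1 1 p p - K 1 1 p q < 0)
    (ρs : Fin 2 → Fin N → ℝ)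
    (hρs : IsDistGG μ ρs)
    (hmin : ∀ ρ, IsDistGG μ ρ → energyGG x μ K ρs ≤ energyGG x μ K ρ) :
    ∃ ι₁ ι₂ : Fin N,
      ρs 0 ι₁ * μ ι₁ = 1 ∧ ρs 1 ι₂ * μ ι₂ = 1 ∧
      (∀ ι, ι ≠ ι₁ → ρs 0 ι = 0) ∧ (∀ ι, ι ≠ ι₂ → ρs 1 ι = 0) := by
  obtain ⟨hρ₀, hρ₁⟩ := hρs
  have hm₀ : ∀ i ι, 0 ≤ ρs i ι * μ ι := fun i ι => mul_nonneg (hρ₀ i ι) (hμ ι).le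
  have hV : ∀ i ι κ, ι ≠ κ → K i i (x ι) (x ι) - K i i (x ι) (x κ) < 0 := by
    simp only [Fin.forall_fin_two]
    exact ⟨fun ι κ h => hD11 _ _ (hx.ne h), fun ι κ h => hD22 _ _ (hx.ne h)⟩
  have hdirac : ∀ a b, massEnergy (fun i k a b => K i k (x a) (x b)) (fun i ι => ρs i ι * μ ι) ≤
      massEnergy (fun i k a b => K i k (x a) (x b)) (fun i => Pi.single (![a, b] i) 1) := by
    intro a b
    rw [← energyGG_eq_massEnergy, ← energyGG_div_eq_massEnergy x fun ι => (hμ ι).ne']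
    refine hmin _ (isDistGG_div hμ (fun i ι => ?_) fun i => ?_)
    · exact (Pi.single_nonneg.2 zero_le_one : (0 : Fin N → ℝ) ≤ _) ι
    · simp
  have hconc := mul_eq_zero_of_massEnergy_le_single hV hm₀ hρ₁ hdirac
  obtain ⟨ι₁, h₁, hzero₁⟩ := exists_eq_one_of_sum_eq_one_of_mul_eq_zero (hρ₁ 0) fun _ _ => hconc 0
  obtain ⟨ι₂, h₂, hzero₂⟩ := exists_eq_one_of_sum_eq_one_of_mul_eq_zero (hρ₁ 1) fun _ _ => hconc 1
  refine ⟨ι₁, ι₂, h₁, h₂, fun ι hι => ?_, fun ι hι => ?_⟩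
  · exact (mul_eq_zero.1 (hzero₁ ι hι)).resolve_right (hμ ι).ne'
  · exact (mul_eq_zero.1 (hzero₂ ι hι)).resolve_right (hμ ι).ne'
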